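/- A closed term t of the lambda-calculus with shift and reset is stuck (i.e., t is not a value and admits no reduction step) if and only if t = E[Sk.t'] for some pure evaluation context E, variable k, and term t'. -/

import Mathlib

/-- Terms of the calculus λS: variables, abstractions, applications,
    shift (Sk.t) and reset (⟨t⟩). -/
inductive Tm : Type
  | var : ℕ → Tm
  | lam : ℕ → Tm → Tm
  | app : Tm → Tm → Tm
  | shift : ℕ → Tm → Tm
  | reset : Tm → Tm
deriving DecidableEq

namespace Tm

/-- Values are λ-abstractions. -/
def IsValue : Tm → Prop
  | lam _ _ => True
  | _ => False

/-- Free variables. -/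
def fv : Tm → Finset ℕ
  | var x => {x}
  | lam x t => fv t \ {x}
  | app a b => fv a ∪ fv b
  | shift k t => fv t \ {k}
  | reset t => fv t

def Closed (t : Tm) : Prop := fv t = ∅

/-- Substitution t{v/x} (substituted terms are closed values, so no
    capture can occur). -/
def subst : Tm → ℕ → Tm → Tm
  | var y, x, v => if y = x then v else var y
  | lam y t, x, v => if y = x then lam y t else lam y (subst t x v)
  | app a b, x, v => app (subst a x v) (subst b x v)
  | shift k t, x, v => if k = x then shift k t else shift k (subst t x v)
  | reset t, x, v => reset (subst t x v)

end Tm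

/-- (Evaluation) contexts F ::= [] | v F | F t | ⟨F⟩, represented outside-in.
    Pure contexts E are those with no reset constructor. -/
inductive Ctx : Type
  | hole : Ctx
  | appR : Tm → Ctx → Ctx   -- v F
  | appL : Ctx → Tm → Ctx   -- F t
  | reset : Ctx → Ctx       -- ⟨F⟩
deriving DecidableEq

namespace Ctx

def plug : Ctx → Tm → Tm
  | hole, t => t
  | appR v F, t => Tm.app v (F.plug t)
  | appL F u, t => Tm.app (F.plug t) u
  | reset F, t => Tm.reset (F.plug t)

/-- Well-formedness: in `v F` the term v must be a value. -/
def Wf : Ctx → Prop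
  | hole => True
  | appR v F => v.IsValue ∧ F.Wf
  | appL F _ => F.Wf
  | reset F => F.Wf

/-- Pure contexts contain no reset around the hole. -/
def Pure : Ctx → Prop
  | hole => True
  | appR _ F => F.Pure
  | appL F _ => F.Pure
  | reset _ => False

def fv : Ctx → Finset ℕ
  | hole => ∅
  | appR v F => v.fv ∪ F.fv
  | appL F u => F.fv ∪ u.fv
  | reset F => F.fv

/-- Context composition: (F.comp G)[t] = F[G[t]]. -/
def comp : Ctx → Ctx → Ctx
  | hole, G => G
  | appR v F, G => appR v (F.comp G)
  | appL F u, G => appL (F.comp G) u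
  | reset F, G => reset (F.comp G)

end Ctx

/-- A canonical fresh variable not occurring in the finite set s. -/
def fresh (s : Finset ℕ) : ℕ := s.sup id + 1

/-- The reduction relation →v of λS. -/
inductive Red : Tm → Tm → Prop
  | beta (F : Ctx) (x : ℕ) (t v : Tm) :
      F.Wf → v.IsValue →
      Red (F.plug (Tm.app (Tm.lam x t) v)) (F.plug (t.subst x v))
  | shift (F E : Ctx) (k : ℕ) (t : Tm) :
      F.Wf → E.Wf → E.Pure →
      Red (F.plug (Tm.reset (E.plug (Tm.shift k t))))
          (F.plug (Tm.reset (t.subst k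
            (Tm.lam (fresh E.fv) (Tm.reset (E.plug (Tm.var (fresh E.fv))))))))
  | reset (F : Ctx) (v : Tm) :
      F.Wf → v.IsValue →
      Red (F.plug (Tm.reset v)) (F.plug v)

/-- A term is stuck if it is not a value and admits no reduction step. -/
def Stuck (t : Tm) : Prop := ¬ t.IsValue ∧ ∀ t', ¬ Red t t'

/-- A normal form is a value or a stuck term. -/
def NormalForm (t : Tm) : Prop := t.IsValue ∨ Stuck t

/-- Reflexive-transitive closure of reduction. -/
def Steps : Tm → Tm → Prop := Relation.ReflTransGen Red

/-- Evaluation: t ⇓ t' when t →v* t' and t' is irreducible. -/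
def Evals (t t' : Tm) : Prop := Steps t t' ∧ ∀ u, ¬ Red t' u

/-- Redexes: (λx.t) v, ⟨E[Sk.t]⟩ with E pure, and ⟨v⟩. -/
def IsRedex (r : Tm) : Prop :=
  (∃ x t v, Tm.IsValue v ∧ r = Tm.app (Tm.lam x t) v) ∨
  (∃ E : Ctx, ∃ k t, E.Wf ∧ E.Pure ∧ r = Tm.reset (E.plug (Tm.shift k t))) ∨
  (∃ v, Tm.IsValue v ∧ r = Tm.reset v)

/-- Divergence: an infinite reduction sequence. -/
def Diverges (t : Tm) : Prop := ∃ f : ℕ → Tm, f 0 = t ∧ ∀ n, Red (f n) (f (n + 1))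

/-- Ω = (λx.x x)(λx.x x). -/
def Omega : Tm :=
  Tm.app (Tm.lam 0 (Tm.app (Tm.var 0) (Tm.var 0)))
         (Tm.lam 0 (Tm.app (Tm.var 0) (Tm.var 0)))

/-- Arbitrary one-hole contexts C. -/
inductive GCtx : Type
  | hole : GCtx
  | lam : ℕ → GCtx → GCtx
  | appL : GCtx → Tm → GCtx
  | appR : Tm → GCtx → GCtx
  | shift : ℕ → GCtx → GCtx
  | reset : GCtx → GCtx

def GCtx.plug : GCtx → Tm → Tm
  | hole, t => t
  | lam x C, t => Tm.lam x (C.plug t)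
  | appL C u, t => Tm.app (C.plug t) u
  | appR u C, t => Tm.app u (C.plug t)
  | shift k C, t => Tm.shift k (C.plug t)
  | reset C, t => Tm.reset (C.plug t)

/-- Contextual equivalence for the relaxed semantics. -/
def CtxEquiv (t0 t1 : Tm) : Prop :=
  ∀ C : GCtx, (C.plug t0).Closed → (C.plug t1).Closed →
    ((∃ v, v.IsValue ∧ Evals (C.plug t0) v) ↔ (∃ v, v.IsValue ∧ Evals (C.plug t1) v)) ∧
    ((∃ s, Stuck s ∧ Evals (C.plug t0) s) ↔ (∃ s, Stuck s ∧ Evals (C.plug t1) s))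

/-- Contextual equivalence for the original (top-level reset) semantics. -/
def CtxEquivP (t0 t1 : Tm) : Prop :=
  ∀ C : GCtx, (Tm.reset (C.plug t0)).Closed → (Tm.reset (C.plug t1)).Closed →
    ((∃ v, v.IsValue ∧ Evals (Tm.reset (C.plug t0)) v) ↔
     (∃ v, v.IsValue ∧ Evals (Tm.reset (C.plug t1)) v))

/-- The term-generating closure of a relation R on closed terms. -/
inductive TmClo (R : Tm → Tm → Prop) : Tm → Tm → Prop
  | base {t t'} : R t t' → TmClo R t t'
  | var (x : ℕ) : TmClo R (Tm.var x) (Tm.var x)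
  | lam {t t'} (x : ℕ) : TmClo R t t' → TmClo R (Tm.lam x t) (Tm.lam x t')
  | app {a a' b b'} : TmClo R a a' → TmClo R b b' →
      TmClo R (Tm.app a b) (Tm.app a' b')
  | shift {t t'} (k : ℕ) : TmClo R t t' → TmClo R (Tm.shift k t) (Tm.shift k t')
  | reset {t t'} : TmClo R t t' → TmClo R (Tm.reset t) (Tm.reset t')

/-!
By induction on a closed term, it is a value, or `F[r]` with `r` a redex, or `E[Sk.t]` with `E`
pure; the middle case reduces. Conversely `E[Sk.t]` is not a value, and it cannot reduce because
every step fires at some `F[r]`, and no such decomposition of `E[Sk.t]` exists.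
-/

namespace Tm

lemma Closed.of_app {a b : Tm} (h : (app a b).Closed) : a.Closed ∧ b.Closed := by
  simpa [Closed, fv, Finset.union_eq_empty] using h

lemma IsValue.exists_eq_lam {v : Tm} (hv : v.IsValue) : ∃ x s, v = lam x s := by
  cases v <;> first | exact ⟨_, _, rfl⟩ | exact hv.elim

end Tm

namespace Ctx

lemma Pure.not_isValue_plug_shift {E : Ctx} (hE : E.Pure) (k : ℕ) (t : Tm) :
    ¬ (E.plug (Tm.shift k t)).IsValue := by
  cases E <;> simp_all [plug, Tm.IsValue, Pure]

lemma not_isValue_plug_of_isRedex (F : Ctx) {r : Tm} (hr : IsRedex r) :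
    ¬ (F.plug r).IsValue := by
  cases F with
  | hole => rcases hr with ⟨_, _, _, _, rfl⟩ | ⟨_, _, _, _, _, rfl⟩ | ⟨_, _, rfl⟩ <;> exact id
  | _ => exact id

/-- Walking down the common spine, the first mismatch would put `E'[Sk.t]` or `F'[r]` in a
value position, which neither can occupy. -/
theorem Pure.plug_shift_ne_plug_redex {E : Ctx} (hEw : E.Wf) (hE : E.Pure) (k : ℕ) (t : Tm)
    {F : Ctx} (hF : F.Wf) {r : Tm} (hr : IsRedex r) :
    E.plug (Tm.shift k t) ≠ F.plug r := by
  induction E generalizing F with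
  | hole =>
    intro h
    cases F with
    | hole =>
      rcases hr with ⟨_, _, _, _, rfl⟩ | ⟨_, _, _, _, _, rfl⟩ | ⟨_, _, rfl⟩ <;> cases h
    | _ => cases h
  | appR v E ih =>
    replace hE : E.Pure := hE
    intro h
    cases F with
    | hole =>
      rcases hr with ⟨_, _, w, hw, rfl⟩ | ⟨_, _, _, _, _, rfl⟩ | ⟨_, _, rfl⟩ <;> cases h
      exact hE.not_isValue_plug_shift k t hw
    | appR w F => exact ih hEw.2 hE hF.2 (Tm.app.inj h).2
    | appL F u => exact F.not_isValue_plug_of_isRedex hr ((Tm.app.inj h).1 ▸ hEw.1)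
    | reset F => cases h
  | appL E u ih =>
    replace hE : E.Pure := hE
    intro h
    cases F with
    | hole =>
      rcases hr with ⟨_, _, _, _, rfl⟩ | ⟨_, _, _, _, _, rfl⟩ | ⟨_, _, rfl⟩
      · exact hE.not_isValue_plug_shift k t ((Tm.app.inj h).1 ▸ trivial)
      all_goals cases h
    | appR w F => exact hE.not_isValue_plug_shift k t ((Tm.app.inj h).1 ▸ hF.1)
    | appL F u => exact ih (F := F) hEw hE hF (Tm.app.inj h).1
    | reset F => cases h
  | reset => exact hE.elim

end Ctx

lemma IsRedex.exists_red_plug {r : Tm} (hr : IsRedex r) {F : Ctx} (hF : F.Wf) :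
    ∃ u, Red (F.plug r) u := by
  rcases hr with ⟨x, s, v, hv, rfl⟩ | ⟨E, k, s, hEw, hE, rfl⟩ | ⟨v, hv, rfl⟩
  · exact ⟨_, .beta F x s v hF hv⟩
  · exact ⟨_, .shift F E k s hF hEw hE⟩
  · exact ⟨_, .reset F v hF hv⟩

lemma Red.exists_plug_redex {t u : Tm} (h : Red t u) :
    ∃ (F : Ctx) (r : Tm), F.Wf ∧ IsRedex r ∧ t = F.plug r := by
  cases h with
  | beta F x s v hF hv => exact ⟨F, _, hF, .inl ⟨x, s, v, hv, rfl⟩, rfl⟩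
  | shift F E k s hF hEw hE => exact ⟨F, _, hF, .inr (.inl ⟨E, k, s, hEw, hE, rfl⟩), rfl⟩
  | reset F v hF hv => exact ⟨F, _, hF, .inr (.inr ⟨v, hv, rfl⟩), rfl⟩

theorem Tm.Closed.isValue_or_plug_redex_or_plug_shift {t : Tm} (ht : t.Closed) :
    t.IsValue ∨
    (∃ (F : Ctx) (r : Tm), F.Wf ∧ IsRedex r ∧ t = F.plug r) ∨
    (∃ (E : Ctx) (k : ℕ) (s : Tm), E.Wf ∧ E.Pure ∧ t = E.plug (Tm.shift k s)) := by
  induction t with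
  | var x => simp [Tm.Closed, Tm.fv] at ht
  | lam => exact .inl trivial
  | app a b iha ihb =>
    obtain ⟨ha, hb⟩ := ht.of_app
    rcases iha ha with hva | ⟨F, r, hF, hr, rfl⟩ | ⟨E, k, s, hEw, hE, rfl⟩
    · rcases ihb hb with hvb | ⟨F, r, hF, hr, rfl⟩ | ⟨E, k, s, hEw, hE, rfl⟩
      · obtain ⟨x, s, rfl⟩ := hva.exists_eq_lam
        exact .inr (.inl ⟨.hole, _, trivial, .inl ⟨x, s, b, hvb, rfl⟩, rfl⟩)
      · exact .inr (.inl ⟨.appR a F, r, ⟨hva, hF⟩, hr, rfl⟩)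
      · exact .inr (.inr ⟨.appR a E, k, s, ⟨hva, hEw⟩, hE, rfl⟩)
    · exact .inr (.inl ⟨.appL F b, r, hF, hr, rfl⟩)
    · exact .inr (.inr ⟨.appL E b, k, s, hEw, hE, rfl⟩)
  | shift k s => exact .inr (.inr ⟨.hole, k, s, trivial, trivial, rfl⟩)
  | reset s ih =>
    rcases ih ht with hv | ⟨F, r, hF, hr, rfl⟩ | ⟨E, k, s, hEw, hE, rfl⟩
    · exact .inr (.inl ⟨.hole, _, trivial, .inr (.inr ⟨s, hv, rfl⟩), rfl⟩)
    · exact .inr (.inl ⟨.reset F, r, hF, hr, rfl⟩)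
    · exact .inr (.inl ⟨.hole, _, trivial, .inr (.inl ⟨E, k, s, hEw, hE, rfl⟩), rfl⟩)

/-- a closed term is stuck iff it is of the form E[Sk.t']
    for a pure context E. -/
theorem stuck_iff_pure_shift (t : Tm) (ht : t.Closed) :
    Stuck t ↔ ∃ (E : Ctx) (k : ℕ) (t' : Tm),
      E.Wf ∧ E.Pure ∧ t = E.plug (Tm.shift k t') := by
  constructor
  · rintro ⟨hnv, hnr⟩
    rcases ht.isValue_or_plug_redex_or_plug_shift with hv | ⟨F, r, hF, hr, rfl⟩ | hshift
    · exact absurd hv hnv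
    · obtain ⟨u, hu⟩ := hr.exists_red_plug hF
      exact absurd hu (hnr u)
    · exact hshift
  · rintro ⟨E, k, t', hEw, hE, rfl⟩
    refine ⟨hE.not_isValue_plug_shift k t', fun u hu => ?_⟩
    obtain ⟨F, r, hF, hr, heq⟩ := hu.exists_plug_redex
    exact hE.plug_shift_ne_plug_redex hEw k t' hF hr heq
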